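/- Let p be a prime, f ∈ KS_{p,2}, t ∈ ℤ_p, and define g : ℤ_p → ℤ_p by g(s) = f(s+t). Then for every integer ν ≥ 0: Δ^ν g(0) ≡ Δ^ν f(0) (mod p^{ν+1} ℤ_p); that is, the normalized Mahler coefficients Δ^ν f(0)/p^ν of a function of KS_{p,2} are invariant modulo pℤ_p under translation. -/

import Mathlib

/-!
Translating by `t` turns `Δ^ν g(0)` into `Δ^ν f(t)`, so it suffices to show that `Δ^ν f(t) - Δ^ν f(0)`
is divisible by `p^{ν+1}`. For `t ∈ ℕ` this difference telescopes into a sum of values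
`Δ^{ν+1} f(k)`, each divisible by `p^{ν+1}`; the case of general `t` follows because `ℕ` is dense in
`ℤ_p`, `Δ^ν f` is continuous and divisibility by a fixed element is a closed condition.
-/

open Finset

/-- The forward difference operator `Δ_h^n` with increment `h ≥ 1`:
`Δ_h^n f(s) = ∑_{ν=0}^n (n choose ν)·(−1)^(n−ν)·f(s+νh)`. -/
noncomputable def deltaH (p : ℕ) [Fact p.Prime] (h : ℕ) (f : ℤ_[p] → ℤ_[p]) (n : ℕ)
    (s : ℤ_[p]) : ℤ_[p] :=
  ∑ ν ∈ Finset.range (n + 1),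
    (n.choose ν : ℤ_[p]) * (-1) ^ (n - ν) * f (s + (ν : ℤ_[p]) * (h : ℤ_[p]))

/-- `f ∈ KS_{p,2}`: `f` is continuous and satisfies the Kummer type congruences
`Δ^n f(s) ∈ p^n ℤ_p` for all integers `n ≥ 0` and all `s ∈ ℤ_p`. -/
def KS2 (p : ℕ) [Fact p.Prime] (f : ℤ_[p] → ℤ_[p]) : Prop :=
  Continuous f ∧ ∀ (n : ℕ) (s : ℤ_[p]), (p : ℤ_[p]) ^ n ∣ deltaH p 1 f n s

lemma isClosed_setOf_dvd {R : Type*} [Monoid R] [TopologicalSpace R] [ContinuousMul R]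
    [CompactSpace R] [T2Space R] (a : R) : IsClosed {x : R | a ∣ x} := by
  have hrange : {x : R | a ∣ x} = Set.range (a * ·) := by
    ext x
    exact ⟨fun ⟨c, hc⟩ => ⟨c, hc.symm⟩, fun ⟨c, hc⟩ => ⟨c, hc.symm⟩⟩
  rw [hrange]
  exact (isCompact_range (continuous_const.mul continuous_id)).isClosed

namespace PadicInt

variable {p : ℕ} [Fact p.Prime]

lemma dvd_sub_of_forall_dvd_sub_add_one {F : ℤ_[p] → ℤ_[p]} (hF : Continuous F) {a : ℤ_[p]}
    (hstep : ∀ s, a ∣ F (s + 1) - F s) (t : ℤ_[p]) : a ∣ F t - F 0 := by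
  have hclosed : IsClosed {u | a ∣ F u - F 0} :=
    (isClosed_setOf_dvd a).preimage (hF.sub continuous_const)
  have hnat : ∀ m : ℕ, a ∣ F m - F 0 := by
    intro m
    induction m with
    | zero => simp
    | succ k ih =>
      have htelescope : F ↑(k + 1) - F 0 = (F (k + 1) - F k) + (F k - F 0) := by
        push_cast
        ring
      rw [htelescope]
      exact dvd_add (hstep k) ih
  exact hclosed.closure_subset_iff.mpr (Set.range_subset_iff.mpr hnat) (denseRange_natCast t)

end PadicInt

section deltaH

variable (p : ℕ) [Fact p.Prime]

lemma deltaH_one_eq_fwdDiff_iter (f : ℤ_[p] → ℤ_[p]) (n : ℕ) (s : ℤ_[p]) :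
    deltaH p 1 f n s = (fwdDiff (1 : ℤ_[p]))^[n] f s := by
  rw [fwdDiff_iter_eq_sum_shift, deltaH]
  refine sum_congr rfl fun k _ => ?_
  rw [zsmul_eq_mul, nsmul_eq_mul]
  push_cast
  ring

lemma deltaH_one_succ (f : ℤ_[p] → ℤ_[p]) (n : ℕ) (s : ℤ_[p]) :
    deltaH p 1 f (n + 1) s = deltaH p 1 f n (s + 1) - deltaH p 1 f n s := by
  simp only [deltaH_one_eq_fwdDiff_iter, Function.iterate_succ_apply', fwdDiff]

lemma deltaH_comp_add_right (h : ℕ) (f : ℤ_[p] → ℤ_[p]) (t : ℤ_[p]) (n : ℕ) (s : ℤ_[p]) :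
    deltaH p h (fun x => f (x + t)) n s = deltaH p h f n (s + t) := by
  refine sum_congr rfl fun k _ => ?_
  rw [add_right_comm]

lemma continuous_deltaH (h : ℕ) {f : ℤ_[p] → ℤ_[p]} (hf : Continuous f) (n : ℕ) :
    Continuous (deltaH p h f n) :=
  continuous_finsetSum _ fun _ _ => continuous_const.mul (hf.comp (continuous_add_const _))

end deltaH

theorem stmt13 (p : ℕ) [Fact p.Prime] (f : ℤ_[p] → ℤ_[p]) (hf : KS2 p f) (t : ℤ_[p])
    (g : ℤ_[p] → ℤ_[p]) (hg : ∀ s, g s = f (s + t)) (ν : ℕ) :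
    (p : ℤ_[p]) ^ (ν + 1) ∣ deltaH p 1 g ν 0 - deltaH p 1 f ν 0 := by
  obtain ⟨hf_cont, hf_kummer⟩ := hf
  rw [show g = fun s => f (s + t) from funext hg, deltaH_comp_add_right, zero_add]
  refine PadicInt.dvd_sub_of_forall_dvd_sub_add_one (continuous_deltaH p 1 hf_cont ν)
    (fun s => ?_) t
  rw [← deltaH_one_succ]
  exact hf_kummer (ν + 1) s
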